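/- Fix integers 0 ≤ k ≤ s and reals q, μ > 0, ρ ≥ 0. Then ∫₀^∞ q e^{-q t} [ ∑_{j=0}^{k} C(k,j) e^{-j μ t} (1 - e^{-μ t})^{k - j} · e^{-ρ(1 - e^{-μ t})} (ρ (1 - e^{-μ t}))^{s - j} / (s - j)! ] dt = ∑_{j=0}^{k} ∑_{m=0}^{k + s - 2j} C(k,j) C(k+s-2j, m) (ρ^{s-j} (-1)^m / (s-j)!) · (q / (q + (j + m) μ)) · M(1, q/μ + j + m + 1, -ρ), where M is Kummer's confluent hypergeometric function. -/

import Mathlib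

/-!
Expanding `(1 - e^{-μt})^{k+s-2j}` binomially reduces the integral to the Laplace-type
integrals `∫₀^∞ e^{-ct} e^{-ρ(1 - e^{-μt})} dt`; after the substitution `t ↦ μt` these are
`∫₀^∞ e^{-bt} e^{-ρ(1 - e^{-t})} dt` with `b = c/μ`. Expanding `e^{-ρ u}` as a power series and
integrating termwise with the Beta integral `∫₀^∞ e^{-bt} (1 - e^{-t})^n dt = n! / (b)_{n+1}`
gives `∑ₙ (-ρ)^n / (b)_{n+1} = M(1, b + 1, -ρ) / b`. The Beta integral itself follows by
induction on `n` from `(1 - e^{-t})^{n+1} = (1 - e^{-t})^n - e^{-t} (1 - e^{-t})^n`.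
-/

/-- Kummer's confluent hypergeometric function `M(1, b, z) = ∑ₙ zⁿ / (b)ₙ`,
where `(b)ₙ = ∏_{i=0}^{n-1} (b + i)` is the Pochhammer symbol. -/
noncomputable def kummerM1 (b z : ℝ) : ℝ :=
  ∑' n : ℕ, z ^ n / ∏ i ∈ Finset.range n, (b + (i : ℝ))

open MeasureTheory Real Finset Set
open scoped Nat

lemma prod_range_succ_add_eq_mul (b : ℝ) (n : ℕ) :
    ∏ i ∈ range (n + 1), (b + i) = b * ∏ i ∈ range n, (b + 1 + i) := by
  rw [prod_range_succ', mul_comm]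
  push_cast
  simp only [add_zero, add_right_comm b, add_assoc]

lemma one_sub_exp_neg_mem_Icc {t : ℝ} (ht : 0 ≤ t) : 1 - exp (-t) ∈ Icc (0 : ℝ) 1 :=
  ⟨sub_nonneg.2 (exp_le_one_iff.2 (neg_nonpos.2 ht)), by linarith [exp_pos (-t)]⟩

lemma integral_exp_neg_mul_Ioi_zero {b : ℝ} (hb : 0 < b) :
    ∫ t in Ioi (0 : ℝ), exp (-b * t) = b⁻¹ := by
  rw [integral_exp_mul_Ioi (neg_neg_iff_pos.2 hb), mul_zero, exp_zero, div_neg, neg_div, neg_neg,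
    one_div]

lemma integrableOn_exp_neg_mul_mul {b C : ℝ} (hb : 0 < b) {g : ℝ → ℝ} (hg : Continuous g)
    (hgC : ∀ t ∈ Ioi (0 : ℝ), ‖g t‖ ≤ C) :
    IntegrableOn (fun t => exp (-b * t) * g t) (Ioi 0) :=
  (exp_neg_integrableOn_Ioi 0 hb).mul_bdd hg.aestronglyMeasurable
    ((ae_restrict_iff' measurableSet_Ioi).2 (Filter.Eventually.of_forall hgC))

lemma integrableOn_exp_neg_mul_mul_one_sub_exp_neg_pow {b : ℝ} (hb : 0 < b) (n : ℕ) :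
    IntegrableOn (fun t => exp (-b * t) * (1 - exp (-t)) ^ n) (Ioi 0) :=
  integrableOn_exp_neg_mul_mul hb (by fun_prop) (C := 1) fun t ht => by
    obtain ⟨h0, h1⟩ := one_sub_exp_neg_mem_Icc (le_of_lt ht)
    rw [norm_pow, Real.norm_of_nonneg h0]
    exact pow_le_one₀ h0 h1

theorem integral_exp_neg_mul_mul_one_sub_exp_neg_pow {b : ℝ} (hb : 0 < b) (n : ℕ) :
    ∫ t in Ioi (0 : ℝ), exp (-b * t) * (1 - exp (-t)) ^ n
      = n ! / ∏ i ∈ range (n + 1), (b + i) := by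
  induction n generalizing b with
  | zero => simpa using integral_exp_neg_mul_Ioi_zero hb
  | succ n ih =>
    have hb1 : 0 < b + 1 := by linarith
    have hsplit : ∀ t, exp (-b * t) * (1 - exp (-t)) ^ (n + 1)
        = exp (-b * t) * (1 - exp (-t)) ^ n - exp (-(b + 1) * t) * (1 - exp (-t)) ^ n := by
      intro t
      rw [show -(b + 1) * t = -b * t + -t by ring, exp_add]
      ring
    simp_rw [hsplit]
    rw [integral_sub (integrableOn_exp_neg_mul_mul_one_sub_exp_neg_pow hb n)
      (integrableOn_exp_neg_mul_mul_one_sub_exp_neg_pow hb1 n), ih hb, ih hb1,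
      prod_range_succ_add_eq_mul b (n + 1), prod_range_succ_add_eq_mul b n,
      prod_range_succ (fun i : ℕ => b + 1 + i) n]
    have hP : 0 < ∏ i ∈ range n, (b + 1 + (i : ℝ)) := prod_pos fun i _ => by positivity
    have hbn : (0 : ℝ) < b + 1 + n := by positivity
    push_cast [Nat.factorial_succ]
    field_simp
    ring

lemma exp_eq_tsum_pow_div_factorial (x : ℝ) : exp x = ∑' n : ℕ, x ^ n / n ! := by
  rw [exp_eq_exp_ℝ, NormedSpace.exp_eq_tsum_div]

theorem integral_exp_neg_mul_mul_exp_one_sub_exp_neg {b : ℝ} (hb : 0 < b) (ρ : ℝ) :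
    ∫ t in Ioi (0 : ℝ), exp (-b * t) * exp (-ρ * (1 - exp (-t)))
      = kummerM1 (b + 1) (-ρ) / b := by
  set F : ℕ → ℝ → ℝ := fun n t => (-ρ) ^ n / n ! * (exp (-b * t) * (1 - exp (-t)) ^ n)
  have hF_int : ∀ n, IntegrableOn (F n) (Ioi 0) := fun n =>
    (integrableOn_exp_neg_mul_mul_one_sub_exp_neg_pow hb n).const_mul _
  have hF_norm : ∀ n, ∫ t in Ioi (0 : ℝ), ‖F n t‖ ≤ |ρ| ^ n / n ! * b⁻¹ := fun n => by
    rw [← integral_exp_neg_mul_Ioi_zero hb, ← integral_const_mul]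
    refine setIntegral_mono_on (hF_int n).norm
      ((exp_neg_integrableOn_Ioi 0 hb).const_mul _) measurableSet_Ioi fun t ht => ?_
    obtain ⟨h0, h1⟩ := one_sub_exp_neg_mem_Icc (le_of_lt ht)
    simp only [F, norm_mul, norm_div, norm_pow, norm_neg, Real.norm_of_nonneg (exp_pos _).le,
      Real.norm_of_nonneg h0, RCLike.norm_natCast, Real.norm_eq_abs]
    have := pow_le_one₀ h0 h1 (n := n)
    have := exp_pos (-b * t)
    gcongr
    nlinarith
  have hsum : Summable fun n => ∫ t in Ioi (0 : ℝ), ‖F n t‖ :=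
    .of_nonneg_of_le (fun n => integral_nonneg fun t => norm_nonneg _) hF_norm
      ((summable_pow_div_factorial |ρ|).mul_right _)
  have hexp : ∀ t, exp (-b * t) * exp (-ρ * (1 - exp (-t))) = ∑' n, F n t := fun t => by
    rw [exp_eq_tsum_pow_div_factorial (-ρ * _), ← tsum_mul_left]
    refine tsum_congr fun n => ?_
    simp only [F, mul_pow]
    ring
  have hF_integral : ∀ n, ∫ t in Ioi (0 : ℝ), F n t
      = (-ρ) ^ n / (∏ i ∈ range n, (b + 1 + i)) / b := fun n => by
    have hP : 0 < ∏ i ∈ range n, (b + 1 + (i : ℝ)) := prod_pos fun i _ => by positivity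
    rw [integral_const_mul, integral_exp_neg_mul_mul_one_sub_exp_neg_pow hb,
      prod_range_succ_add_eq_mul]
    field_simp
  simp_rw [hexp]
  rw [← integral_tsum_of_summable_integral_norm hF_int hsum, tsum_congr hF_integral,
    tsum_div_const, kummerM1]

lemma integrableOn_exp_neg_mul_mul_exp_one_sub_exp_neg_mul {c μ : ℝ} (hc : 0 < c) (hμ : 0 ≤ μ)
    (ρ : ℝ) :
    IntegrableOn (fun t => exp (-c * t) * exp (-ρ * (1 - exp (-μ * t)))) (Ioi 0) :=
  integrableOn_exp_neg_mul_mul hc (by fun_prop) (C := exp |ρ|) fun t ht => by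
    obtain ⟨h0, h1⟩ := one_sub_exp_neg_mem_Icc (mul_nonneg hμ (le_of_lt ht))
    rw [Real.norm_of_nonneg (exp_pos _).le, exp_le_exp, neg_mul μ]
    nlinarith [neg_abs_le ρ, abs_nonneg ρ]

theorem integral_exp_neg_mul_mul_exp_one_sub_exp_neg_mul {c μ : ℝ} (hc : 0 < c) (hμ : 0 < μ)
    (ρ : ℝ) :
    ∫ t in Ioi (0 : ℝ), exp (-c * t) * exp (-ρ * (1 - exp (-μ * t)))
      = kummerM1 (c / μ + 1) (-ρ) / c := by
  have h := integral_comp_mul_left_Ioi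
    (fun t => exp (-(c / μ) * t) * exp (-ρ * (1 - exp (-t)))) 0 hμ
  simp only [mul_zero, integral_exp_neg_mul_mul_exp_one_sub_exp_neg (div_pos hc hμ),
    smul_eq_mul] at h
  have hcμ : ∀ t, -(c / μ) * (μ * t) = -c * t := fun t => by field_simp
  simp only [hcμ, ← neg_mul] at h
  rw [h]
  field_simp

lemma one_sub_pow_eq_sum {R : Type*} [CommRing R] (x : R) (n : ℕ) :
    (1 - x) ^ n = ∑ m ∈ range (n + 1), (-1) ^ m * (n.choose m : R) * x ^ m := by
  rw [sub_eq_neg_add, add_pow]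
  refine sum_congr rfl fun m _ => ?_
  rw [neg_pow, one_pow]
  ring

noncomputable def mmInfTransitionProb (k s : ℕ) (μ ρ t : ℝ) : ℝ :=
  ∑ j ∈ range (k + 1),
    (k.choose j : ℝ) * exp (-(j : ℝ) * μ * t) * (1 - exp (-μ * t)) ^ (k - j)
      * exp (-ρ * (1 - exp (-μ * t))) * (ρ * (1 - exp (-μ * t))) ^ (s - j) / (s - j)!

lemma exp_mul_mmInfTransitionProb {k s : ℕ} (hks : k ≤ s) (q μ ρ t : ℝ) :
    exp (-q * t) * mmInfTransitionProb k s μ ρ t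
      = ∑ j ∈ range (k + 1), ∑ m ∈ range (k + s - 2 * j + 1),
          (k.choose j : ℝ) * ((k + s - 2 * j).choose m : ℝ) * (ρ ^ (s - j) * (-1) ^ m / (s - j)!)
            * (exp (-(q + (j + m) * μ) * t) * exp (-ρ * (1 - exp (-μ * t)))) := by
  rw [mmInfTransitionProb, mul_sum]
  refine sum_congr rfl fun j hj => ?_
  have hN : k - j + (s - j) = k + s - 2 * j := by have := mem_range.1 hj; omega
  have hexp : ∀ m : ℕ, exp (-q * t) * exp (-(j : ℝ) * μ * t) * exp (-μ * t) ^ m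
      = exp (-(q + (j + m) * μ) * t) := fun m => by
    rw [← exp_nat_mul, ← exp_add, ← exp_add]
    ring_nf
  calc _ = (k.choose j : ℝ) * (ρ ^ (s - j) / (s - j)!) * exp (-ρ * (1 - exp (-μ * t)))
        * (exp (-q * t) * exp (-(j : ℝ) * μ * t) * (1 - exp (-μ * t)) ^ (k + s - 2 * j)) := by
        rw [← hN, pow_add, mul_pow]
        ring
    _ = _ := by
        rw [one_sub_pow_eq_sum, mul_sum, mul_sum]
        refine sum_congr rfl fun m _ => ?_
        rw [← hexp]
        ring

theorem stmt_12_general (k s : ℕ) (hks : k ≤ s) (q μ ρ : ℝ) (hq : 0 < q) (hμ : 0 < μ) :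
    ∫ t in Set.Ioi (0 : ℝ), q * Real.exp (-q * t) *
        ∑ j ∈ Finset.range (k + 1),
          (k.choose j : ℝ) * Real.exp (-(j : ℝ) * μ * t) * (1 - Real.exp (-μ * t)) ^ (k - j)
            * Real.exp (-ρ * (1 - Real.exp (-μ * t)))
            * (ρ * (1 - Real.exp (-μ * t))) ^ (s - j) / (Nat.factorial (s - j) : ℝ)
      = ∑ j ∈ Finset.range (k + 1), ∑ m ∈ Finset.range (k + s - 2 * j + 1),
          (k.choose j : ℝ) * ((k + s - 2 * j).choose m : ℝ)
            * (ρ ^ (s - j) * (-1 : ℝ) ^ m / (Nat.factorial (s - j) : ℝ))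
            * (q / (q + ((j : ℝ) + (m : ℝ)) * μ))
            * kummerM1 (q / μ + (j : ℝ) + (m : ℝ) + 1) (-ρ) := by
  have hrate : ∀ j m : ℕ, 0 < q + ((j : ℝ) + m) * μ := fun j m => by positivity
  have hint (j m : ℕ) := integrableOn_exp_neg_mul_mul_exp_one_sub_exp_neg_mul (hrate j m) hμ.le ρ
  change ∫ t in Ioi 0, q * exp (-q * t) * mmInfTransitionProb k s μ ρ t = _
  simp_rw [mul_assoc q, exp_mul_mmInfTransitionProb hks]
  rw [integral_const_mul, integral_finsetSum _ fun j _ =>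
    integrable_finsetSum _ fun m _ => (hint j m).const_mul _, mul_sum]
  refine sum_congr rfl fun j _ => ?_
  rw [integral_finsetSum _ fun m _ => (hint j m).const_mul _, mul_sum]
  refine sum_congr rfl fun m _ => ?_
  rw [integral_const_mul, integral_exp_neg_mul_mul_exp_one_sub_exp_neg_mul (hrate j m) hμ,
    show (q + (j + m) * μ) / μ + 1 = q / μ + j + m + 1 by field_simp; ring]
  ring

/-- for integers `0 ≤ k ≤ s` and reals `q, μ > 0`, `ρ ≥ 0`, integrating the
time-`t` probability that Binomial(k, e^{-μt}) + Poisson(ρ(1-e^{-μt})) equals `s` against the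
exponential density `q e^{-qt}` yields a double sum of Kummer functions. -/
theorem stmt_12 (k s : ℕ) (hks : k ≤ s) (q μ ρ : ℝ) (hq : 0 < q) (hμ : 0 < μ) (hρ : 0 ≤ ρ) :
    ∫ t in Set.Ioi (0 : ℝ), q * Real.exp (-q * t) *
        ∑ j ∈ Finset.range (k + 1),
          (k.choose j : ℝ) * Real.exp (-(j : ℝ) * μ * t) * (1 - Real.exp (-μ * t)) ^ (k - j)
            * Real.exp (-ρ * (1 - Real.exp (-μ * t)))
            * (ρ * (1 - Real.exp (-μ * t))) ^ (s - j) / (Nat.factorial (s - j) : ℝ)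
      = ∑ j ∈ Finset.range (k + 1), ∑ m ∈ Finset.range (k + s - 2 * j + 1),
          (k.choose j : ℝ) * ((k + s - 2 * j).choose m : ℝ)
            * (ρ ^ (s - j) * (-1 : ℝ) ^ m / (Nat.factorial (s - j) : ℝ))
            * (q / (q + ((j : ℝ) + (m : ℝ)) * μ))
            * kummerM1 (q / μ + (j : ℝ) + (m : ℝ) + 1) (-ρ) :=
  stmt_12_general k s hks q μ ρ hq hμ
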